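/- Two terms built from variables by ordinal addition and left multiplication by ω define the same function on all of ω^ω if and only if the corresponding flat normal forms (sums of monomials ω^e·x obtained via distributivity ω(x+y)=ωx+ωy and absorption x+y+ωx = y+ωx) can be transformed into each other using only associativity of +, the identity x+y+z+x+t+y = y+x+z+x+t+y, absorption x+y+ωx=y+ωx, units, and ω·0=0. -/

import Mathlib

/-!
Soundness is a computation with Cantor normal forms. For completeness, distributivity and
absorption bring every term to a sum of monomials `ω^e · x_i` in which no monomial is followed
by a higher power of its variable. The guarded axiom lets two adjacent monomials commute when both
occur again further right, so the head of one such sum can be moved to the front of an equivalent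
one, and induction finishes the argument. That the head can be moved is read off from the values
at probes `x_i ↦ ω^(c i) · k i`: the coefficient of a fixed `ω^d` counts, with weights `k i`,
the monomials of level `e + c i = d` behind the last monomial of higher level.
-/

open Ordinal

/-- Terms over the signature `{0, +, ω·}`, with variables indexed by `ℕ`. -/
inductive Term where
  | zero : Term
  | var : ℕ → Term
  | add : Term → Term → Term
  | omul : Term → Term
deriving DecidableEq

/-- Evaluation of a term under an assignment of ordinals to the variables,
interpreting `add` as ordinal addition and `omul` as left multiplication by `ω`. -/
noncomputable def Term.eval (φ : ℕ → Ordinal) : Term → Ordinal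
  | .zero => 0
  | .var i => φ i
  | .add E F => E.eval φ + F.eval φ
  | .omul E => ω * E.eval φ

/-- Derivability in equational logic from the axiom system
`Σ = {associativity, ω(x+y)=ωx+ωy, x+y+ωx=y+ωx, x+y+z+x+t+y=y+x+z+x+t+y,
x+0=x, 0+x=x, ω·0=0}`.  The axioms are stated schematically (for arbitrary
terms substituted for the variables), which accounts for the substitution
rule of equational logic. -/
inductive Derives : Term → Term → Prop
  | assoc (x y z : Term) : Derives (x.add (y.add z)) ((x.add y).add z)
  | distrib (x y : Term) : Derives ((x.add y).omul) ((x.omul).add (y.omul))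
  | absorb (x y : Term) : Derives ((x.add y).add x.omul) (y.add x.omul)
  | guarded (x y z t : Term) :
      Derives (((((x.add y).add z).add x).add t).add y)
              (((((y.add x).add z).add x).add t).add y)
  | add_zero (x : Term) : Derives (x.add .zero) x
  | zero_add (x : Term) : Derives (Term.add .zero x) x
  | omul_zero : Derives (Term.omul .zero) .zero
  | refl (x : Term) : Derives x x
  | symm {x y : Term} : Derives x y → Derives y x
  | trans {x y z : Term} : Derives x y → Derives y z → Derives x z
  | add_congr {x y x' y' : Term} :
      Derives x x' → Derives y y' → Derives (x.add y) (x'.add y')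
  | omul_congr {x x' : Term} : Derives x x' → Derives x.omul x'.omul

lemma List.exists_split_last {α : Type*} {p : α → Prop} {L : List α} {a : α} (ha : a ∈ L)
    (hp : p a) : ∃ A x S, L = A ++ x :: S ∧ p x ∧ ∀ z ∈ S, ¬p z := by
  classical
  obtain ⟨x, S, A, hS, hx, hsplit, -⟩ :=
    List.exists_of_eraseP (p := fun z => decide (p z)) (List.mem_reverse.2 ha) (by simpa using hp)
  refine ⟨A.reverse, x, S.reverse, ?_, by simpa using hx,
    fun z hz => by simpa using hS z (by simpa using hz)⟩
  simpa using congrArg List.reverse hsplit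

lemma List.exists_of_cons_eq_append_cons {α : Type*} {b w : α} {M A S : List α}
    (h : b :: M = A ++ w :: S) (hw : w ≠ b) : ∃ A', A = b :: A' ∧ M = A' ++ w :: S := by
  rcases List.cons_eq_append_iff.1 h with ⟨-, h'⟩ | h'
  · exact absurd (List.cons.inj h').1 hw
  · exact h'

lemma Nat.eq_and_eq_of_mul_add_eq {κ a b r s : ℕ} (h : κ * a + r = κ * b + s) (hr : r < κ)
    (hs : s < κ) : a = b ∧ r = s := by
  have hmod := congrArg (· % κ) h
  have hdiv := congrArg (· / κ) h
  simp only [Nat.mul_add_mod, Nat.mod_eq_of_lt hr, Nat.mod_eq_of_lt hs] at hmod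
  have hκ : 0 < κ := by omega
  simp only [Nat.mul_add_div hκ, Nat.div_eq_of_lt hr, Nat.div_eq_of_lt hs] at hdiv
  omega

lemma omega0_mul_lt_omega0_opow_omega0 {a : Ordinal} (ha : a < ω ^ ω) : ω * a < ω ^ ω := by
  have := isPrincipal_mul_omega0_opow_opow 1
  rw [opow_one] at this
  exact this (left_lt_opow one_lt_omega0 one_lt_omega0) ha

/-- Fails at `x = ω ^ ω`, where `ω * x = x`. -/
lemma add_add_omega0_mul {x : Ordinal} (hx : x < ω ^ ω) (y : Ordinal) :
    x + (y + ω * x) = y + ω * x := by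
  rcases eq_or_ne x 0 with rfl | hx0
  · simp
  obtain ⟨n, hn⟩ := lt_omega0.1 ((lt_opow_iff_log_lt one_lt_omega0 hx0).1 hx)
  apply add_of_omega0_opow_le (b := n + 1)
  · simpa [hn, Order.succ_eq_add_one] using lt_opow_succ_log_self one_lt_omega0 x
  · calc ω ^ ((n : Ordinal) + 1) = ω * ω ^ log ω x := by
          rw [hn, ← opow_one_add]; norm_cast; rw [Nat.add_comm]
      _ ≤ ω * x := mul_le_mul_right (opow_log_le_self ω hx0) ω
      _ ≤ y + ω * x := le_add_self

/-- Below `c`, ordinals only differ by their leading `ω ^ log c` parts, which commute. -/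
lemma add_add_comm_of_le {x y c : Ordinal} (hx : x ≤ c) (hy : y ≤ c) :
    x + (y + c) = y + (x + c) := by
  rcases eq_or_ne c 0 with rfl | hc
  · simp [nonpos_iff_eq_zero.1 hx, nonpos_iff_eq_zero.1 hy]
  set p := ω ^ log ω c
  have hp : p ≤ c := opow_log_le_self ω hc
  have hquot {z : Ordinal} (hz : z ≤ c) : ∃ n : ℕ, ∀ w, p ≤ w → z + w = p * n + w := by
    have hlt : z / p < ω := by
      rw [← lt_mul_iff_div_lt (opow_ne_zero _ omega0_ne_zero), ← opow_succ]
      exact hz.trans_lt (lt_opow_succ_log_self one_lt_omega0 c)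
    obtain ⟨n, hn⟩ := lt_omega0.1 hlt
    refine ⟨n, fun w hw => ?_⟩
    conv_lhs => rw [← div_add_mod z p, hn, add_assoc]
    rw [add_of_omega0_opow_le (mod_lt z (opow_ne_zero _ omega0_ne_zero)) hw]
  obtain ⟨m, hm⟩ := hquot hx
  obtain ⟨n, hn⟩ := hquot hy
  rw [hm _ (hp.trans le_add_self), hn _ hp, hn _ (hp.trans le_add_self), hm _ hp,
    ← add_assoc, ← add_assoc, ← mul_add, ← mul_add, ← Nat.cast_add, ← Nat.cast_add,
    Nat.add_comm]

/-- The coefficient of `ω ^ d` in the Cantor normal form of `o`. -/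
noncomputable def coeffAt (d : ℕ) (o : Ordinal) : Ordinal :=
  o % ω ^ ((d : Ordinal) + 1) / ω ^ (d : Ordinal)

lemma coeffAt_mul_add {d : ℕ} (q : Ordinal) (n : ℕ) {r : Ordinal}
    (hr : r < ω ^ (d : Ordinal)) :
    coeffAt d (ω ^ ((d : Ordinal) + 1) * q + (ω ^ (d : Ordinal) * n + r)) = n := by
  have hd : (d : Ordinal) < d + 1 := lt_add_one _
  have hlt : ω ^ (d : Ordinal) * n + r < ω ^ ((d : Ordinal) + 1) :=
    isPrincipal_add_omega0_opow _ (opow_mul_lt_opow (natCast_lt_omega0 n) hd)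
      (hr.trans ((opow_lt_opow_iff_right one_lt_omega0).2 hd))
  rw [coeffAt, mul_add_mod_self, mod_eq_of_lt hlt, mul_add_div _ (opow_ne_zero _ omega0_ne_zero),
    div_eq_zero_of_lt hr, add_zero]

-- `(e, i)` stands for `ω^e · x_i`, and a list of monomials for their sum from left to right.
abbrev Mon := ℕ × ℕ

namespace Term

def mterm (m : Mon) : Term := omul^[m.1] (var m.2)

def ofList : List Mon → Term
  | [] => zero
  | m :: L => (mterm m).add (ofList L)

def monomials : Term → List Mon
  | zero => []
  | var i => [(0, i)]
  | add E F => E.monomials ++ F.monomials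
  | omul E => E.monomials.map fun m => (m.1 + 1, m.2)

@[simp] lemma ofList_nil : ofList [] = zero := rfl

@[simp] lemma ofList_cons (m : Mon) (L : List Mon) :
    ofList (m :: L) = (mterm m).add (ofList L) := rfl

lemma mterm_succ (e i : ℕ) : mterm (e + 1, i) = (mterm (e, i)).omul :=
  Function.iterate_succ_apply' _ _ _

@[simp] lemma monomials_mterm (m : Mon) : (mterm m).monomials = [m] := by
  obtain ⟨e, i⟩ := m
  induction e with
  | zero => rfl
  | succ e ih => rw [mterm_succ, monomials, ih]; rfl

@[simp] lemma monomials_ofList (L : List Mon) : (ofList L).monomials = L := by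
  induction L with
  | nil => rfl
  | cons m L ih => simp [monomials, ih]

lemma eval_mterm (φ : ℕ → Ordinal) (m : Mon) :
    (mterm m).eval φ = ω ^ (m.1 : Ordinal) * φ m.2 := by
  obtain ⟨e, i⟩ := m
  induction e with
  | zero => simp [mterm, eval]
  | succ e ih =>
    rw [mterm_succ, eval, ih, ← mul_assoc, ← opow_one_add]
    exact congrArg (ω ^ · * φ i) (by norm_cast; rw [Nat.add_comm])

lemma eval_ofList_append (φ : ℕ → Ordinal) (A B : List Mon) :
    (ofList (A ++ B)).eval φ = (ofList A).eval φ + (ofList B).eval φ := by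
  induction A with
  | nil => simp [eval]
  | cons m A ih => simp [eval, ih, add_assoc]

end Term

instance : Trans Derives Derives Derives := ⟨Derives.trans⟩

open Term

local infix:50 " ≋ " => Derives

namespace Derives

lemma ofList_append (A B : List Mon) : ofList (A ++ B) ≋ (ofList A).add (ofList B) := by
  induction A with
  | nil => exact (zero_add _).symm
  | cons m A ih => exact ((refl _).add_congr ih).trans (assoc _ _ _)

lemma omul_ofList (L : List Mon) : (ofList L).omul ≋ ofList (L.map fun m => (m.1 + 1, m.2)) := by
  induction L with
  | nil => exact omul_zero
  | cons m L ih =>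
    rw [List.map_cons, ofList_cons, ofList_cons, mterm_succ m.1 m.2]
    exact (distrib _ _).trans ((refl _).add_congr ih)

lemma self_ofList_monomials (E : Term) : E ≋ ofList E.monomials := by
  induction E with
  | zero => exact refl _
  | var i => exact (add_zero _).symm
  | add E F ihE ihF => exact (ihE.add_congr ihF).trans (ofList_append _ _).symm
  | omul E ih => exact ih.omul_congr.trans (omul_ofList _)

lemma ofList_monomials {E F : Term} (h : E ≋ F) : ofList E.monomials ≋ ofList F.monomials :=
  (self_ofList_monomials E).symm.trans (h.trans (self_ofList_monomials F))

lemma add_of_absorbs {X Z : Term} (h : (X.add zero).add Z ≋ zero.add Z) : X.add Z ≋ Z :=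
  ((add_zero X).symm.add_congr (refl Z)).trans (h.trans (zero_add Z))

lemma absorb_mterm (e d i : ℕ) (Y : Term) :
    ((mterm (e, i)).add Y).add (mterm (e + d + 1, i)) ≋ Y.add (mterm (e + d + 1, i)) := by
  induction d generalizing e Y with
  | zero => rw [Nat.add_zero, mterm_succ]; exact absorb _ _
  | succ d ih =>
    have hN := add_of_absorbs (ih e zero)
    have hωN := add_of_absorbs (ih (e + 1) zero)
    rw [show e + 1 + d + 1 = e + d + 1 + 1 by omega, mterm_succ (e + d + 1), mterm_succ e] at hωN
    rw [show e + (d + 1) + 1 = e + d + 1 + 1 by omega, mterm_succ (e + d + 1)]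
    set X := mterm (e, i)
    set N := mterm (e + d + 1, i)
    calc (X.add Y).add N.omul
      _ ≋ (X.add Y).add (X.add N).omul := (refl _).add_congr hN.symm.omul_congr
      _ ≋ (X.add Y).add (X.omul.add N.omul) := (refl _).add_congr (distrib _ _)
      _ ≋ ((X.add Y).add X.omul).add N.omul := assoc _ _ _
      _ ≋ (Y.add X.omul).add N.omul := (absorb _ _).add_congr (refl _)
      _ ≋ Y.add (X.omul.add N.omul) := (assoc _ _ _).symm
      _ ≋ Y.add N.omul := (refl _).add_congr hωN

lemma ofList_drop_of_lt {e e' i : ℕ} (h : e < e') (Q₁ Q₂ : List Mon) :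
    ofList ((e, i) :: (Q₁ ++ (e', i) :: Q₂)) ≋ ofList (Q₁ ++ (e', i) :: Q₂) := by
  obtain ⟨d, rfl⟩ : ∃ d, e' = e + d + 1 := ⟨e' - e - 1, by omega⟩
  simpa [monomials] using
    ((absorb_mterm e d i (ofList Q₁)).add_congr (refl (ofList Q₂))).ofList_monomials

lemma ofList_swap (a b : Mon) (Z T R : List Mon) :
    ofList (a :: b :: (Z ++ a :: (T ++ b :: R))) ≋
      ofList (b :: a :: (Z ++ a :: (T ++ b :: R))) := by
  simpa [monomials] using ((guarded (mterm a) (mterm b) (ofList Z) (ofList T)).add_congr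
    (refl (ofList R))).ofList_monomials

lemma ofList_swap_of_mem {a b : Mon} {Q : List Mon} (ha : a ∈ Q) (hb : b ∈ Q) :
    ofList (a :: b :: Q) ≋ ofList (b :: a :: Q) := by
  obtain ⟨Q₁, Q₂, rfl⟩ := List.append_of_mem ha
  rcases List.mem_append.1 hb with hb | hb
  · obtain ⟨Z, T, rfl⟩ := List.append_of_mem hb
    simpa using (ofList_swap b a Z T Q₂).symm
  · rcases List.mem_cons.1 hb with rfl | hb
    · exact refl _
    obtain ⟨T, R, rfl⟩ := List.append_of_mem hb
    exact ofList_swap a b Q₁ T R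

lemma ofList_bubble {b : Mon} {P S : List Mon} (hb : b ∈ S) (hP : ∀ x ∈ P, x ∈ S) :
    ofList (P ++ b :: S) ≋ ofList (b :: (P ++ S)) := by
  induction P with
  | nil => exact refl _
  | cons d P ih =>
    have hd : d ∈ P ++ S := List.mem_append_right P (hP d List.mem_cons_self)
    exact ((refl (mterm d)).add_congr (ih fun x hx => hP x (List.mem_cons_of_mem d hx))).trans
      (ofList_swap_of_mem hd (List.mem_append_right P hb))

end Derives

lemma Term.eval_lt {φ : ℕ → Ordinal} (hφ : ∀ i, φ i < ω ^ ω) (E : Term) :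
    E.eval φ < ω ^ ω := by
  induction E with
  | zero => exact opow_pos _ omega0_pos
  | var i => exact hφ i
  | add E F ihE ihF => exact isPrincipal_add_omega0_opow ω ihE ihF
  | omul E ih => exact omega0_mul_lt_omega0_opow_omega0 ih

theorem Derives.eval_eq {E F : Term} (h : E ≋ F) (φ : ℕ → Ordinal)
    (hφ : ∀ i, φ i < ω ^ ω) :
    E.eval φ = F.eval φ := by
  induction h with
  | assoc => exact (add_assoc _ _ _).symm
  | distrib => exact mul_add _ _ _
  | absorb x y => exact (add_assoc _ _ _).trans (add_add_omega0_mul (x.eval_lt hφ) _)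
  | guarded x y z t =>
    simp only [Term.eval, add_assoc]
    apply add_add_comm_of_le
    · exact le_self_add.trans le_add_self
    · exact le_add_self.trans (le_add_self.trans le_add_self)
  | add_zero => exact _root_.add_zero _
  | zero_add => exact _root_.zero_add _
  | omul_zero => exact mul_zero _
  | refl => rfl
  | symm _ ih => exact ih.symm
  | trans _ _ ih₁ ih₂ => exact ih₁.trans ih₂
  | add_congr _ _ ih₁ ih₂ => exact congrArg₂ (· + ·) ih₁ ih₂
  | omul_congr _ ih => exact congrArg (ω * ·) ih

def Reduced (L : List Mon) : Prop := L.Pairwise fun a b => a.2 = b.2 → b.1 ≤ a.1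

lemma Reduced.le_of_mem_append {A B : List Mon} (hL : Reduced (A ++ B)) {a b : Mon} (ha : a ∈ A)
    (hb : b ∈ B) (h : a.2 = b.2) : b.1 ≤ a.1 :=
  hL.rel_of_mem_append ha hb h

lemma exists_reduced_ofList (L : List Mon) : ∃ L', Reduced L' ∧ ofList L ≋ ofList L' := by
  induction L with
  | nil => exact ⟨[], List.Pairwise.nil, Derives.refl _⟩
  | cons m L ih =>
    obtain ⟨L', hred, hder⟩ := ih
    have hcons : ofList (m :: L) ≋ ofList (m :: L') := (Derives.refl _).add_congr hder
    by_cases hbig : ∃ m' ∈ L', m'.2 = m.2 ∧ m.1 < m'.1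
    · obtain ⟨⟨e', i⟩, hm', rfl, hlt⟩ := hbig
      obtain ⟨Q₁, Q₂, rfl⟩ := List.append_of_mem hm'
      exact ⟨_, hred, hcons.trans (Derives.ofList_drop_of_lt hlt Q₁ Q₂)⟩
    · push Not at hbig
      exact ⟨m :: L', hred.cons fun m' hm' h => hbig m' hm' h.symm, hcons⟩

lemma exists_reduced_derives (E : Term) : ∃ L, Reduced L ∧ E ≋ ofList L := by
  obtain ⟨L, hL, hder⟩ := exists_reduced_ofList E.monomials
  exact ⟨L, hL, (Derives.self_ofList_monomials E).trans hder⟩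

lemma Reduced.le_head {B u : Mon} {M : List Mon} (hM : Reduced (B :: M)) (hu : u ∈ B :: M)
    (h : u.2 = B.2) : u.1 ≤ B.1 := by
  rcases List.mem_cons.1 hu with rfl | hu
  · exact le_rfl
  · exact (List.pairwise_cons.1 hM).1 u hu h.symm

lemma Reduced.count_eq_of_split {B Y w : Mon} {M' A S : List Mon} (hM : Reduced (B :: M'))
    (hBM' : B ∉ M') (hsplit : B :: M' = A ++ w :: S) (hw : w = B ∨ (w.2 = Y.2 ∧ Y.1 < w.1))
    (hYB : Y ≠ B) : S.count Y = (B :: M').count Y := by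
  have hYA : Y ∉ A := by
    intro hYA
    rcases hw with rfl | ⟨hwY, hlt⟩
    · rcases List.cons_eq_append_iff.1 hsplit with ⟨rfl, -⟩ | ⟨A', -, rfl⟩
      · simp at hYA
      · simp at hBM'
    · have := (hsplit ▸ hM : Reduced (A ++ w :: S)).le_of_mem_append hYA List.mem_cons_self
        hwY.symm
      omega
  have hwY : w ≠ Y := by
    rintro rfl
    rcases hw with rfl | ⟨-, hlt⟩
    · exact hYB rfl
    · exact lt_irrefl _ hlt
  simp [hsplit, List.count_append, List.count_eq_zero.2 hYA, hwY]

universe u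

section Probe

variable (c k : ℕ → ℕ) (d : ℕ)

noncomputable def probe : ℕ → Ordinal.{u} := fun i => ω ^ (c i : Ordinal) * k i

def IsHigh (m : Mon) : Prop := k m.2 ≠ 0 ∧ d < m.1 + c m.2

def weightAt (S : List Mon) : ℕ := (S.map fun m => if m.1 + c m.2 = d then k m.2 else 0).sum

variable {c k d}

@[simp] lemma weightAt_nil : weightAt c k d [] = 0 := rfl

@[simp] lemma weightAt_cons (m : Mon) (S : List Mon) :
    weightAt c k d (m :: S) = (if m.1 + c m.2 = d then k m.2 else 0) + weightAt c k d S :=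
  List.sum_cons

lemma probe_lt (i : ℕ) : probe c k i < ω ^ ω :=
  opow_mul_lt_opow (natCast_lt_omega0 _) (natCast_lt_omega0 _)

lemma eval_mterm_probe (m : Mon) :
    (mterm m).eval (probe.{u} c k) = ω ^ ((m.1 + c m.2 : ℕ) : Ordinal) * k m.2 := by
  rw [eval_mterm, probe, ← mul_assoc, ← opow_add, Nat.cast_add]

lemma exists_eval_probe_of_not_high {S : List Mon} (hS : ∀ m ∈ S, ¬IsHigh c k d m) :
    ∃ r < ω ^ (d : Ordinal),
      (ofList S).eval (probe.{u} c k) = ω ^ (d : Ordinal) * weightAt c k d S + r := by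
  induction S with
  | nil => exact ⟨0, opow_pos _ omega0_pos, by simp [eval]⟩
  | cons m S ih =>
    obtain ⟨r, hr, hS'⟩ := ih fun m' hm' => hS m' (List.mem_cons_of_mem m hm')
    rw [ofList_cons, eval, hS', eval_mterm_probe, weightAt_cons]
    by_cases hlev : m.1 + c m.2 = d
    · refine ⟨r, hr, ?_⟩
      rw [if_pos hlev, ← add_assoc, hlev, ← mul_add, Nat.cast_add]
    have ht : ω ^ ((m.1 + c m.2 : ℕ) : Ordinal) * k m.2 < ω ^ (d : Ordinal) := by
      rcases not_and_or.1 (hS m List.mem_cons_self) with hk | hlow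
      · rw [not_not.1 hk, Nat.cast_zero, mul_zero]
        exact opow_pos _ omega0_pos
      · exact opow_mul_lt_opow (natCast_lt_omega0 _)
          (by exact_mod_cast lt_of_le_of_ne (not_lt.1 hlow) hlev)
    rw [if_neg hlev, Nat.zero_add]
    rcases Nat.eq_zero_or_pos (weightAt c k d S) with hW | hW
    · refine ⟨_, isPrincipal_add_omega0_opow _ ht hr, ?_⟩
      simp [hW]
    · refine ⟨r, hr, add_of_omega0_opow_le ht (le_add_right (le_mul_left _ ?_))⟩
      exact_mod_cast hW

lemma exists_eval_probe_append_high {x : Mon} (hx : IsHigh c k d x) (A : List Mon) :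
    ∃ q, (ofList (A ++ [x])).eval (probe.{u} c k) = ω ^ ((d : Ordinal) + 1) * q := by
  obtain ⟨s, hs⟩ : ∃ s, x.1 + c x.2 = d + 1 + s :=
    ⟨x.1 + c x.2 - (d + 1), by have := hx.2; omega⟩
  set p := ω ^ ((d : Ordinal) + 1)
  have hx' : ω ^ ((x.1 + c x.2 : ℕ) : Ordinal) * k x.2 = p * (ω ^ (s : Ordinal) * k x.2) := by
    rw [hs, ← mul_assoc, ← opow_add]
    push_cast
    rfl
  have hp : p ≤ ω ^ ((x.1 + c x.2 : ℕ) : Ordinal) * k x.2 := by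
    rw [hx']
    exact le_mul_left _
      (mul_pos (opow_pos _ omega0_pos) (by exact_mod_cast Nat.pos_of_ne_zero hx.1))
  rw [eval_ofList_append, ofList_cons, ofList_nil, eval, eval, eval_mterm_probe, add_zero]
  set a := (ofList A).eval (probe.{u} c k)
  refine ⟨a / p + ω ^ (s : Ordinal) * k x.2, ?_⟩
  conv_lhs => rw [← div_add_mod a p, add_assoc,
    add_of_omega0_opow_le (mod_lt a (opow_ne_zero _ omega0_ne_zero)) hp]
  rw [hx', mul_add]

theorem coeffAt_eval_probe {S : List Mon} (hS : ∀ m ∈ S, ¬IsHigh c k d m) :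
    coeffAt d ((ofList S).eval (probe.{u} c k)) = weightAt c k d S := by
  obtain ⟨r, hr, hS'⟩ := exists_eval_probe_of_not_high.{u} hS
  have := coeffAt_mul_add 0 (weightAt c k d S) hr
  rwa [mul_zero, zero_add, ← hS'] at this

theorem coeffAt_eval_probe_append {A S : List Mon} {x : Mon} (hx : IsHigh c k d x)
    (hS : ∀ m ∈ S, ¬IsHigh c k d m) :
    coeffAt d ((ofList (A ++ x :: S)).eval (probe.{u} c k)) = weightAt c k d S := by
  obtain ⟨q, hq⟩ := exists_eval_probe_append_high.{u} hx A
  obtain ⟨r, hr, hS'⟩ := exists_eval_probe_of_not_high.{u} hS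
  rw [show A ++ x :: S = A ++ [x] ++ S by simp, eval_ofList_append, hq, hS', coeffAt_mul_add _ _ hr]

end Probe

def SemEq (L M : List Mon) : Prop :=
  ∀ φ : ℕ → Ordinal.{u}, (∀ i, φ i < ω ^ ω) → (ofList L).eval φ = (ofList M).eval φ

lemma SemEq.coeffAt_eq {L M : List Mon} (h : SemEq.{u} L M) (c k : ℕ → ℕ) (d : ℕ) :
    coeffAt d ((ofList L).eval (probe.{u} c k)) = coeffAt d ((ofList M).eval (probe.{u} c k)) := by
  rw [h _ probe_lt]

lemma weightAt_indicator (g v : ℕ) (S : List Mon) :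
    weightAt (fun _ => 0) (fun i => if i = v then 1 else 0) g S = S.count (g, v) := by
  induction S with
  | nil => rfl
  | cons m S ih =>
    rw [weightAt_cons, ih, List.count_cons, Nat.add_comm]
    obtain ⟨e, i⟩ := m
    by_cases he : e = g <;> by_cases hi : i = v <;> simp [he, hi]

/-- In a reduced list every copy of `ω^g x_v` lies behind the last higher power of `x_v`. -/
lemma coeffAt_eval_probe_indicator {L : List Mon} (hL : Reduced L) (g v : ℕ) :
    coeffAt g ((ofList L).eval (probe.{u} (fun _ => 0) fun i => if i = v then 1 else 0)) =
      L.count (g, v) := by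
  have hhigh (m : Mon) : IsHigh (fun _ => 0) (fun i => if i = v then 1 else 0) g m ↔
      m.2 = v ∧ g < m.1 := by simp [IsHigh]
  by_cases hex : ∃ m ∈ L, IsHigh (fun _ => 0) (fun i => if i = v then 1 else 0) g m
  · obtain ⟨m, hm, hmh⟩ := hex
    obtain ⟨A, x, S, rfl, hx, hS⟩ := List.exists_split_last hm hmh
    rw [coeffAt_eval_probe_append hx hS, weightAt_indicator]
    have hxv := (hhigh x).1 hx
    have hA : (g, v) ∉ A := fun hA => by
      have := hL.le_of_mem_append hA List.mem_cons_self hxv.1.symm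
      omega
    simp [List.count_append, List.count_eq_zero.2 hA,
      show x ≠ (g, v) from fun h => by rw [h] at hxv; exact lt_irrefl g hxv.2]
  · push Not at hex
    rw [coeffAt_eval_probe hex, weightAt_indicator]

lemma SemEq.perm {L M : List Mon} (hL : Reduced L) (hM : Reduced M) (h : SemEq.{u} L M) :
    L.Perm M := by
  refine List.perm_iff_count.2 fun m => ?_
  have := h.coeffAt_eq (fun _ => 0) (fun i => if i = m.2 then 1 else 0) m.1
  rwa [coeffAt_eval_probe_indicator hL, coeffAt_eval_probe_indicator hM, Nat.cast_inj] at this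

def pairWeights (j y κ : ℕ) : ℕ → ℕ :=
  fun i => if i = j then κ else if i = y then 1 else 0

section PairProbe

variable {j y κ : ℕ} {c : ℕ → ℕ} {d : ℕ}

lemma isHigh_pairWeights (hκ : κ ≠ 0) (m : Mon) :
    IsHigh c (pairWeights j y κ) d m ↔ (m.2 = j ∨ m.2 = y) ∧ d < m.1 + c m.2 := by
  unfold IsHigh pairWeights
  split_ifs <;> simp [*]

lemma weightAt_pairWeights (hjy : j ≠ y) (S : List Mon) :
    weightAt c (pairWeights j y κ) d S =
      κ * S.countP (fun m => m.2 = j ∧ m.1 + c j = d) +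
        S.countP (fun m => m.2 = y ∧ m.1 + c y = d) := by
  induction S with
  | nil => rfl
  | cons m S ih =>
    rw [weightAt_cons, ih, List.countP_cons, List.countP_cons]
    generalize S.countP (fun m => m.2 = j ∧ m.1 + c j = d) = a
    generalize S.countP (fun m => m.2 = y ∧ m.1 + c y = d) = b
    unfold pairWeights
    by_cases hj : m.2 = j
    · by_cases he : m.1 + c j = d
      · simp [hj, he, hjy, mul_add, add_comm, add_left_comm]
      · simp [hj, he, hjy]
    · by_cases hy : m.2 = y
      · by_cases he : m.1 + c y = d
        · simp [hy, he, hjy.symm, add_comm, add_left_comm, add_assoc]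
        · simp [hy, he, hjy.symm]
      · simp [hj, hy]

lemma countP_eq_count {S : List Mon} {g v a : ℕ} (h : g + a = d) :
    S.countP (fun m => m.2 = v ∧ m.1 + a = d) = S.count (g, v) := by
  rw [List.count_eq_countP]
  refine List.countP_congr fun m _ => ?_
  obtain ⟨e, i⟩ := m
  simp only [decide_eq_true_eq, beq_iff_eq, Prod.mk.injEq]
  omega

end PairProbe

/-- With `κ` exceeding both lengths, the coefficient of `ω ^ d` under `x_j ↦ ω^(c j) κ`,
`x_y ↦ ω^(c y)` encodes both counts in base `κ`. -/
theorem SemEq.countP_eq_of_split {L M A₁ S₁ A₂ S₂ : List Mon} {x₁ x₂ : Mon}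
    {j y d : ℕ} (hsem : SemEq.{u} L M) (hjy : j ≠ y) (c : ℕ → ℕ)
    (hL : L = A₁ ++ x₁ :: S₁) (hx₁ : (x₁.2 = j ∨ x₁.2 = y) ∧ d < x₁.1 + c x₁.2)
    (hS₁ : ∀ u ∈ S₁, ¬((u.2 = j ∨ u.2 = y) ∧ d < u.1 + c u.2))
    (hM : M = A₂ ++ x₂ :: S₂) (hx₂ : (x₂.2 = j ∨ x₂.2 = y) ∧ d < x₂.1 + c x₂.2)
    (hS₂ : ∀ u ∈ S₂, ¬((u.2 = j ∨ u.2 = y) ∧ d < u.1 + c u.2)) :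
    S₁.countP (fun u => u.2 = j ∧ u.1 + c j = d) =
        S₂.countP (fun u => u.2 = j ∧ u.1 + c j = d) ∧
      S₁.countP (fun u => u.2 = y ∧ u.1 + c y = d) =
        S₂.countP (fun u => u.2 = y ∧ u.1 + c y = d) := by
  set κ := L.length + M.length + 1
  have hhigh :=
    isHigh_pairWeights (j := j) (y := y) (c := c) (d := d) (Nat.succ_ne_zero _ : κ ≠ 0)
  have key := hsem.coeffAt_eq c (pairWeights j y κ) d
  rw [hL, hM,
    coeffAt_eval_probe_append ((hhigh _).2 hx₁) fun u hu => (hhigh u).not.2 (hS₁ u hu),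
    coeffAt_eval_probe_append ((hhigh _).2 hx₂) fun u hu => (hhigh u).not.2 (hS₂ u hu),
    Nat.cast_inj, weightAt_pairWeights hjy, weightAt_pairWeights hjy] at key
  refine Nat.eq_and_eq_of_mul_add_eq key (List.countP_le_length.trans_lt ?_)
    (List.countP_le_length.trans_lt ?_)
  · simp only [hL, List.length_append, List.length_cons]; omega
  · simp only [hM, List.length_append, List.length_cons]; omega

section Obstructions

variable {L M' P S : List Mon} {B Y : Mon}

/-- For `B = (f, j)` and `Y = (h, y)`, the probe `x_j ↦ ω^h κ, x_y ↦ ω^(f+1)` sees every copy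
of `B` in `L`, but in `B :: M'` the head is absorbed by the last power `≥ h` of `x_y`. -/
theorem SemEq.false_of_barrier (hL : Reduced L) (hM : Reduced (B :: M'))
    (hsem : SemEq.{u} L (B :: M')) (hsplit : L = P ++ Y :: S) (hYB : Y.2 ≠ B.2)
    (hSY : ∀ u ∈ S, u.2 = Y.2 → u.1 < Y.1) (hBP : B ∉ P) : False := by
  obtain ⟨f, j⟩ := B
  obtain ⟨h, y⟩ := Y
  dsimp only at hYB hSY
  have hperm := hsem.perm hL hM
  set c : ℕ → ℕ := fun i => if i = j then h else f + 1
  have hc : c j = h ∧ c y = f + 1 := by simp [c, hYB]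
  set high : Mon → Prop := fun u => (u.2 = j ∨ u.2 = y) ∧ h + f < u.1 + c u.2
  have hY : high (h, y) := ⟨Or.inr rfl, by simp [hc]⟩
  obtain ⟨A, w, S₂, hMsplit, hw, hS₂⟩ :=
    List.exists_split_last (hperm.subset (by simp [hsplit] : (h, y) ∈ L)) hY
  have hwB : w ≠ (f, j) := by
    rintro rfl
    simp only [high, hc, true_or, true_and] at hw
    omega
  obtain ⟨A', rfl, -⟩ := List.exists_of_cons_eq_append_cons hMsplit hwB
  have hS : ∀ u ∈ S, ¬high u := by
    rintro u hu ⟨huj | huy, hlt⟩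
    · have := hM.le_head (hperm.subset (by simp [hsplit, hu])) huj
      simp only [huj, hc] at hlt; omega
    · have := hSY u hu huy
      simp only [huy, hc] at hlt; omega
  obtain ⟨hj, -⟩ := hsem.countP_eq_of_split hYB.symm c hsplit hY hS hMsplit hw hS₂
  rw [hc.1, countP_eq_count (Nat.add_comm f h), countP_eq_count (Nat.add_comm f h)] at hj
  have := hperm.count_eq (f, j)
  rw [hMsplit] at this
  simp only [hsplit, List.count_append, List.count_eq_zero.2 hBP, List.cons_append,
    List.count_cons_self, List.count_cons_of_ne hwB, ne_eq, Prod.mk.injEq, hYB, and_false,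
    not_false_eq_true, List.count_cons_of_ne, zero_add] at this
  omega

/-- For `B = (f, j)` and `Y = (h, y)`, the probe `x_j ↦ ω^(h+1) κ, x_y ↦ ω^f` counts the
copies of `Y` behind the last monomial of level above `f + h`. In `L` this is `B`, so the copy of
`Y` in front of it is missed; in `B :: M'` it is the head or a power `> h` of `x_y`, so none is
missed. -/
theorem SemEq.false_of_unique_after (hL : Reduced L) (hM : Reduced (B :: M'))
    (hsem : SemEq.{u} L (B :: M')) (hsplit : L = P ++ Y :: B :: S) (hYB : Y.2 ≠ B.2)
    (hBP : B ∉ P) (hBS : B ∉ S) : False := by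
  obtain ⟨f, j⟩ := B
  obtain ⟨h, y⟩ := Y
  dsimp only at hYB
  have hperm := hsem.perm hL hM
  have hBM' : (f, j) ∉ M' := by
    have := hperm.count_eq (f, j)
    simp only [hsplit, List.count_append, List.count_eq_zero.2 hBP, List.count_eq_zero.2 hBS,
      List.count_cons_self, ne_eq, Prod.mk.injEq, hYB, and_false, not_false_eq_true,
      List.count_cons_of_ne, zero_add, Nat.right_eq_add] at this
    exact List.count_eq_zero.1 this
  set c : ℕ → ℕ := fun i => if i = j then h + 1 else f
  have hc : c j = h + 1 ∧ c y = f := by simp [c, hYB]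
  set high : Mon → Prop := fun u => (u.2 = j ∨ u.2 = y) ∧ f + h < u.1 + c u.2
  have hB : high (f, j) := ⟨Or.inl rfl, by simp [hc]⟩
  obtain ⟨A, w, S₂, hMsplit, hw, hS₂⟩ :=
    List.exists_split_last (List.mem_cons_self (l := M')) hB
  have hS : ∀ u ∈ S, ¬high u := by
    rintro u hu ⟨huj | huy, hlt⟩
    · have := hM.le_head (hperm.subset (by simp [hsplit, hu])) huj
      have : u.1 ≠ f := fun hf => hBS (Prod.ext (x := u) (y := (f, j)) hf huj ▸ hu)
      simp only [huj, hc] at hlt; omega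
    · have hL' : Reduced ((P ++ [(h, y)]) ++ (f, j) :: S) := by simpa [hsplit] using hL
      have := hL'.le_of_mem_append (a := (h, y)) (by simp) (List.mem_cons_of_mem _ hu) huy.symm
      simp only [huy, hc] at hlt; omega
  obtain ⟨-, hy⟩ := hsem.countP_eq_of_split hYB.symm c
    (by simp [hsplit] : L = (P ++ [(h, y)]) ++ (f, j) :: S) hB hS hMsplit hw hS₂
  rw [hc.2, countP_eq_count (Nat.add_comm h f), countP_eq_count (Nat.add_comm h f)] at hy
  have hw' : w = (f, j) ∨ (w.2 = y ∧ h < w.1) := by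
    rcases hw with ⟨hwj | hwy, hlt⟩
    · have := hM.le_head (hMsplit ▸ by simp : w ∈ (f, j) :: M') hwj
      simp only [hwj, hc] at hlt
      exact Or.inl (Prod.ext (by omega) hwj)
    · simp only [hwy, hc] at hlt
      exact Or.inr ⟨hwy, by omega⟩
  have := hperm.count_eq (h, y)
  rw [Reduced.count_eq_of_split hM hBM' hMsplit hw' (by simp [hYB]), ← this] at hy
  simp only [hsplit, List.count_append, List.count_cons_self, ne_eq, Prod.mk.injEq, hYB.symm,
    and_false, not_false_eq_true, List.count_cons_of_ne] at hy
  omega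

end Obstructions

/-- Every monomial in front of the first copy of `B` in `L` occurs again behind it (otherwise
`false_of_barrier` applies), and so does `B` unless nothing precedes it (otherwise
`false_of_unique_after` applies); hence `ofList_bubble` moves `B` to the front. -/
theorem SemEq.exists_derives_cons {L M' : List Mon} {B : Mon} (hL : Reduced L)
    (hM : Reduced (B :: M')) (hsem : SemEq.{u} L (B :: M')) :
    ∃ L₁, L₁.Sublist L ∧ ofList L ≋ ofList (B :: L₁) := by
  have hperm := hsem.perm hL hM
  obtain ⟨P, S, hBP, rfl, -⟩ := List.exists_erase_eq (hperm.symm.subset List.mem_cons_self)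
  have hYB (Y) (hY : Y ∈ P) : Y.2 ≠ B.2 := fun h => hBP <| by
    have := hL.le_of_mem_append hY List.mem_cons_self h
    have := hM.le_head (hperm.subset (List.mem_append_left _ hY)) h
    rwa [← Prod.ext (by omega) h]
  by_cases hPS : ∀ u ∈ P, u ∈ S
  · by_cases hBS : B ∈ S
    · exact ⟨P ++ S, by simp, Derives.ofList_bubble hBS hPS⟩
    rcases P.eq_nil_or_concat with rfl | ⟨P', Y, rfl⟩
    · exact ⟨S, by simp, Derives.refl _⟩
    exact (hsem.false_of_unique_after hL hM (P := P') (by simp) (hYB Y (by simp))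
      (fun h => hBP (by simp [h])) hBS).elim
  push Not at hPS
  obtain ⟨u, hu, huS⟩ := hPS
  obtain ⟨A, Y, P₂, rfl, hYS, hP₂⟩ := List.exists_split_last (p := (· ∉ S)) hu huS
  refine (hsem.false_of_barrier hL hM (P := A) (S := P₂ ++ B :: S) (by simp) (hYB Y (by simp))
    (fun v hv hvY => ?_) (fun h => hBP (by simp [h]))).elim
  have hvS : v ∈ S := by
    rcases List.mem_append.1 hv with hv | hv
    · exact not_not.1 (hP₂ v hv)
    rcases List.mem_cons.1 hv with rfl | hv
    · exact absurd hvY.symm (hYB Y (by simp))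
    exact hv
  have := hL.le_of_mem_append (A := A ++ Y :: P₂) (by simp) (List.mem_cons_of_mem B hvS) hvY.symm
  have : v.1 ≠ Y.1 := fun h => hYS (Prod.ext h hvY ▸ hvS)
  omega

theorem derives_of_semEq : ∀ {M L : List Mon}, Reduced L → Reduced M → SemEq.{u} L M →
    ofList L ≋ ofList M
  | [], L, hL, hM, hsem => by
    rw [List.perm_nil.1 (hsem.perm hL hM)]
    exact Derives.refl _
  | B :: M', L, hL, hM, hsem => by
    obtain ⟨L₁, hsub, hder⟩ := hsem.exists_derives_cons hL hM
    have hsem₁ : SemEq.{u} L₁ M' := fun φ hφ => by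
      have := (hder.eval_eq φ hφ).symm.trans (hsem φ hφ)
      simpa [eval] using this
    exact hder.trans ((Derives.refl _).add_congr
      (derives_of_semEq (hL.sublist hsub) (List.pairwise_cons.1 hM).2 hsem₁))

/-- `Σ` axiomatizes the equational theory of `⟨ω^ω; +, x ↦ ω·x⟩`:
two terms define the same function on ordinals below `ω^ω` iff they are
derivable from one another in equational logic from `Σ`. -/
theorem sigma_axiomatizes (E F : Term) :
    (∀ φ : ℕ → Ordinal, (∀ i, φ i < ω ^ ω) → E.eval φ = F.eval φ) ↔
      Derives E F := by
  refine ⟨fun h => ?_, fun h => h.eval_eq⟩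
  obtain ⟨L, hL, hEL⟩ := exists_reduced_derives E
  obtain ⟨M, hM, hFM⟩ := exists_reduced_derives F
  have hsem : SemEq L M := fun φ hφ => by
    rw [← hEL.eval_eq φ hφ, ← hFM.eval_eq φ hφ]
    exact h φ hφ
  exact hEL.trans ((derives_of_semEq hL hM hsem).trans hFM.symm)
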